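/- arXiv:2006.13694 — 2 statements merged into one kernel-verified Lean document; each statement's English description precedes it below -/
import Mathlib

section
/- Let p : Y → X be a Kan fibration of simplicial sets such that the boundary inclusion i_n : ∂Δ^n → Δ^n has the left lifting property with respect to p for all n ≥ 1. Let X₀ ⊆ X be the image of p (a simplicial subset) and X₁ = X \ X₀ its levelwise complement (which is a simplicial subset since p is a Kan fibration). Then the restriction of p over X₀ is a trivial fibration (has the right lifting property against all i_n, n ≥ 0), and the restriction of p over X₁ is the empty simplicial set over X₁. -/
universe u

open CategoryTheory Simplicial MonoidalCategory CategoryTheory.Limits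
  CategoryTheory.GrothendieckTopology

/-- A Kan fibration: a map of simplicial sets with the right lifting property
against all horn inclusions `Λ[n, i] ⟶ Δ[n]` for `n ≥ 1`. -/
def KanFibration {Y X : SSet.{u}} (p : Y ⟶ X) : Prop :=
  ∀ (n : ℕ) (i : Fin (n + 2)), HasLiftingProperty ((SSet.horn (n + 1) i).ι) p

lemma boundary_zero_isEmpty (m : SimplexCategoryᵒᵖ) : IsEmpty ((SSet.boundary.{u} 0).obj m) := by
  constructor
  rintro ⟨a, ha⟩
  exact ha (fun b => ⟨0, (Fin.eq_zero _).trans (Fin.eq_zero b).symm⟩)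

/-- Let `p : Y ⟶ X` be a Kan fibration such that the boundary inclusions
`∂Δ[n] ⟶ Δ[n]` for `n ≥ 1` have the left lifting property against `p`.
Let `X₀` be the image of `p` and `X₁` a simplicial subset whose levels are the
complements of the levels of `X₀`.  Then the restriction of `p` over `X₀` is a
trivial fibration, and the restriction of `p` over `X₁` is levelwise empty. -/
theorem restrictions_of_kan_fibration {Y X : SSet.{u}} (p : Y ⟶ X)
    (hp : KanFibration p)
    (hll : ∀ n : ℕ, 1 ≤ n → HasLiftingProperty ((SSet.boundary n).ι) p)
    (X₁ : Subfunctor X)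
    (hX₁ : ∀ n : SimplexCategoryᵒᵖ, X₁.obj n = ((Subfunctor.range p).obj n)ᶜ) :
    (∀ n : ℕ, HasLiftingProperty ((SSet.boundary n).ι)
        (pullback.snd p (Subfunctor.range p).ι)) ∧
      (∀ n : SimplexCategoryᵒᵖ, IsEmpty ((pullback p X₁.ι).obj n)) := by
  constructor
  · intro n
    constructor
    intro f g sq
    rcases Nat.eq_zero_or_pos n with hn | hn
    · subst hn
      -- bottom map corresponds to a 0-simplex of the image
      set x : ((Subfunctor.range p).toFunctor).obj (Opposite.op ⦋0⦌) :=
        SSet.yonedaEquiv g with hx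
      obtain ⟨y, hy⟩ := x.2
      have hfy : (SSet.yonedaEquiv (X := Y) (n := ⦋0⦌)).symm y ≫ p = g ≫ (Subfunctor.range p).ι := by
        ext m a
        have hg : g = (SSet.yonedaEquiv).symm x := by
          rw [hx, Equiv.symm_apply_apply]
        rw [hg]
        show p.app m (Y.map (SSet.stdSimplex.objEquiv a).op y) = X.map (SSet.stdSimplex.objEquiv a).op (x : X.obj _)
        rw [← hy]
        exact FunctorToTypes.naturality (F := Y) (G := X) p (SSet.stdSimplex.objEquiv a).op y
      refine ⟨⟨⟨pullback.lift ((SSet.yonedaEquiv (X := Y) (n := ⦋0⦌)).symm y) g hfy, ?_, ?_⟩⟩⟩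
      · apply pullback.hom_ext <;> ext m a <;>
          exact ((boundary_zero_isEmpty m).false a).elim
      · exact pullback.lift_snd _ _ _
    · haveI := hll n hn
      have sq' : CommSq (f ≫ pullback.fst p (Subfunctor.range p).ι)
          ((SSet.boundary n).ι) p (g ≫ (Subfunctor.range p).ι) := by
        constructor
        rw [Category.assoc, pullback.condition, ← Category.assoc, sq.w, Category.assoc]
      haveI := (hll n hn).sq_hasLift sq'
      refine ⟨⟨⟨pullback.lift sq'.lift g (sq'.fac_right), ?_, ?_⟩⟩⟩
      · apply pullback.hom_ext
        · rw [Category.assoc, pullback.lift_fst, sq'.fac_left]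
        · rw [Category.assoc, pullback.lift_snd, sq.w]
      · exact pullback.lift_snd _ _ _
  · intro n
    constructor
    intro z
    have hc := ConcreteCategory.congr_hom (NatTrans.congr_app
      (pullback.condition (f := p) (g := X₁.ι)) n) z
    have hmem : (((pullback.snd p X₁.ι).app n z : X₁.toFunctor.obj n) : X.obj n)
        ∈ (Subfunctor.range p).obj n := ⟨(pullback.fst p X₁.ι).app n z, hc⟩
    have h2 : (((pullback.snd p X₁.ι).app n z : X₁.toFunctor.obj n) : X.obj n)
        ∈ ((Subfunctor.range p).obj n)ᶜ := by
      rw [← hX₁ n]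
      exact ((pullback.snd p X₁.ι).app n z).2
    exact h2 hmem
end

section
/- Let p : Y → X be a Kan fibration of simplicial sets such that the two projections Y ×_X Y → Y are fiberwise homotopic over X (i.e., there is a homotopy H : (Y ×_X Y) × Δ^1 → Y over X from the first projection to the second). Then for every n ≥ 1, the boundary inclusion i_n : ∂Δ^n → Δ^n has the left lifting property with respect to p. -/
universe u

open CategoryTheory Simplicial MonoidalCategory CategoryTheory.Limits
  CategoryTheory.GrothendieckTopology

/-- The constant map to the vertex `k` of `Δ[1]`. -/
def vtx (Z : SSet.{u}) (k : Fin 2) : Z ⟶ Δ[1] where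
  app m := TypeCat.ofHom (fun _ => SSet.stdSimplex.const 1 k m)
  naturality _ _ _ := rfl

/-- The two projections `Y ×_X Y ⟶ Y` of a map `p : Y ⟶ X` are homotopic over `X`:
there is a homotopy `H : (Y ×_X Y) ⊗ Δ[1] ⟶ Y` over `X` from the first projection
to the second projection. -/
def ProjectionsHomotopic {Y X : SSet.{u}} (p : Y ⟶ X) : Prop :=
  ∃ H : (pullback p p) ⊗ Δ[1] ⟶ Y,
    CartesianMonoidalCategory.lift (𝟙 _) (vtx _ 0) ≫ H = pullback.fst p p ∧
    CartesianMonoidalCategory.lift (𝟙 _) (vtx _ 1) ≫ H = pullback.snd p p ∧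
    H ≫ p = CartesianMonoidalCategory.fst _ _ ≫ pullback.fst p p ≫ p


namespace BoundaryLLP

open SimplexCategory SSet

lemma homext {a b : SimplexCategory} {f g : a ⟶ b}
    (h : ∀ t, ((f.toOrderHom t : Fin (b.len + 1)) : ℕ) = (g.toOrderHom t : ℕ)) : f = g :=
  SimplexCategory.Hom.ext _ _ (OrderHom.ext _ _ (funext fun t => Fin.ext (h t)))

lemma comp_val {a b c : SimplexCategory} (f : a ⟶ b) (g : b ⟶ c) (t : Fin (a.len + 1)) :
    (f ≫ g).toOrderHom t = g.toOrderHom (f.toOrderHom t) := rfl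

lemma val_δ {m : ℕ} (i : Fin (m + 2)) (b : Fin (m + 1)) :
    (((δ i).toOrderHom b) : ℕ) = if (b : ℕ) < (i : ℕ) then (b : ℕ) else (b : ℕ) + 1 := by
  change ((i.succAbove b : Fin (m+2)) : ℕ) = _
  rw [Fin.succAbove]
  split_ifs with h1 h2 h3
  · simp
  · exact absurd (Fin.lt_def.mp h1) (by simpa using h2)
  · exact absurd (Fin.lt_def.mpr (by simpa using h3)) h1
  · simp

lemma val_σ {m : ℕ} (j : Fin (m + 1)) (b : Fin (m + 2)) :
    (((σ j).toOrderHom b) : ℕ) = if (b : ℕ) ≤ (j : ℕ) then (b : ℕ) else (b : ℕ) - 1 := by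
  change ((j.predAbove b : Fin (m+1)) : ℕ) = _
  rw [Fin.predAbove]
  split_ifs with h1 h2 h3
  · exact absurd (Fin.lt_def.mp h1) (by simpa using h2)
  · simp
  · simp
  · exact absurd (Fin.lt_def.mpr (by simpa using h3)) h1

lemma val_id {a : SimplexCategory} (t : Fin (a.len + 1)) :
    ((𝟙 a : a ⟶ a).toOrderHom t) = t := rfl

/-- generic factorization through a face -/
def fac {l : SimplexCategory} {m : ℕ} (φ : l ⟶ ⦋m + 1⦌) (i : Fin (m + 2)) : l ⟶ ⦋m⦌ :=
  φ ≫ σ (Fin.predAbove 0 i)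

lemma val_predAbove_zero {m : ℕ} (i : Fin (m + 2)) :
    ((Fin.predAbove 0 i : Fin (m + 1)) : ℕ) = (i : ℕ) - 1 := by
  rw [Fin.predAbove]
  split_ifs with h1
  · simp
  · simp only [Fin.coe_castPred]
    have h2 : ¬ (((0 : Fin (m+1)).castSucc : ℕ) < (i : ℕ)) := fun hc => h1 (Fin.lt_def.mpr hc)
    have h0 : (((0 : Fin (m+1)).castSucc : ℕ)) = 0 := rfl
    omega

lemma fac_spec {l : SimplexCategory} {m : ℕ} (φ : l ⟶ ⦋m + 1⦌) (i : Fin (m + 2))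
    (h : ∀ b, φ.toOrderHom b ≠ i) : fac φ i ≫ δ i = φ := by
  apply homext
  intro t
  have hne : ((φ.toOrderHom t : Fin (m+2)) : ℕ) ≠ (i : ℕ) :=
    fun hc => h t (Fin.ext hc)
  have hlt : ((φ.toOrderHom t : Fin (m+2)) : ℕ) < m + 2 := (φ.toOrderHom t).isLt
  rw [show fac φ i ≫ δ i = φ ≫ (σ (Fin.predAbove 0 i) ≫ δ i) from by
    simp [fac]]
  rw [comp_val, comp_val, val_δ, val_σ, val_predAbove_zero]
  split_ifs <;> omega

/-- the `J`-th threshold map to `[1]` : sends `b` to `0` iff `b < J`. -/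
def tm (l : SimplexCategory) (J : ℕ) : l ⟶ ⦋1⦌ :=
  SimplexCategory.Hom.mk
    { toFun := fun b => if (b : ℕ) < J then (0 : Fin 2) else 1
      monotone' := by
        intro b c hbc
        have hbc' : (b : ℕ) ≤ (c : ℕ) := hbc
        dsimp only
        split_ifs with h1 h2 h2
        · exact le_refl _
        · exact Fin.zero_le _
        · exact absurd (lt_of_le_of_lt hbc' h2) h1
        · exact le_refl _ }

lemma val_tm (l : SimplexCategory) (J : ℕ) (b : Fin (l.len + 1)) :
    ((tm l J).toOrderHom b : ℕ) = if (b : ℕ) < J then 0 else 1 := by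
  change ((if (b : ℕ) < J then (0 : Fin 2) else 1 : Fin 2) : ℕ) = _
  split_ifs <;> rfl

lemma comp_tm_zero {l l' : SimplexCategory} (α : l ⟶ l') :
    α ≫ tm l' 0 = SimplexCategory.Hom.mk (OrderHom.const _ 1) := by
  apply homext; intro t
  rw [comp_val, val_tm]
  simp [OrderHom.const]
  rfl

lemma comp_tm_big {l : SimplexCategory} {m J : ℕ} (φ : l ⟶ ⦋m⦌) (hJ : m + 1 ≤ J) :
    φ ≫ tm ⦋m⦌ J = SimplexCategory.Hom.mk (OrderHom.const _ 0) := by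
  apply homext; intro t
  rw [comp_val, val_tm]
  have h1 : ((φ.toOrderHom t : Fin (m+1)) : ℕ) < m + 1 := by
    have := (φ.toOrderHom t).isLt
    simpa using this

  rw [if_pos (by omega)]
  rfl

lemma δ_tm {m : ℕ} (i : Fin (m + 2)) (J : ℕ) :
    δ i ≫ tm ⦋m + 1⦌ J = tm ⦋m⦌ (if (i : ℕ) < J then J - 1 else J) := by
  apply homext; intro t
  rw [comp_val, val_tm, val_tm]
  have := val_δ i t
  rw [show (((δ i).toOrderHom t : Fin (m+2)) : ℕ) = if (t : ℕ) < (i : ℕ) then (t : ℕ) else (t : ℕ) + 1 from this]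
  split_ifs <;> omega

def stdId (n : ℕ) : Δ[n] _⦋n⦌ := stdSimplex.objEquiv.symm (𝟙 _)

lemma objEquiv_stdId (n : ℕ) : stdSimplex.objEquiv (stdId.{u} n) = 𝟙 _ := rfl

section Fill

variable {Y X : SSet.{u}}

lemma map_op_comp {Z : SSet.{u}} {a b c : SimplexCategory} (f : a ⟶ b) (g : b ⟶ c)
    (z : Z.obj (Opposite.op c)) :
    Z.map (f ≫ g).op z = Z.map f.op (Z.map g.op z) := by
  rw [CategoryTheory.op_comp, FunctorToTypes.map_comp_apply]

/-- Elementwise horn filling from the right lifting property. -/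
lemma horn_fill (p : Y ⟶ X) {m : ℕ} (k : Fin (m + 2))
    (hp : HasLiftingProperty ((SSet.horn (m + 1) k).ι) p)
    (x : X _⦋m+1⦌)
    (face : ∀ i : Fin (m + 2), i ≠ k → Y _⦋m⦌)
    (hfp : ∀ i hi, p.app _ (face i hi) = X.map (δ i).op x)
    (hc : ∀ (l : SimplexCategory) (i j : Fin (m + 2)) (hi : i ≠ k) (hj : j ≠ k)
      (α β : l ⟶ ⦋m⦌), α ≫ δ i = β ≫ δ j →
      Y.map α.op (face i hi) = Y.map β.op (face j hj)) :
    ∃ y : Y _⦋m+1⦌, p.app _ y = x ∧ ∀ i hi, Y.map (δ i).op y = face i hi := by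
  classical
  have pick : ∀ (l : SimplexCategoryᵒᵖ) (a : (Λ[m+1, k] : SSet).obj l),
      ∃ i : Fin (m+2), i ≠ k ∧ ∀ b, SSet.stdSimplex.asOrderHom a.1 b ≠ i := by
    intro l a
    have h := (SSet.mem_horn_iff _ _).mp a.2
    rw [Set.ne_univ_iff_exists_notMem] at h
    obtain ⟨i, hi⟩ := h
    simp only [Set.mem_union, Set.mem_range, Set.mem_singleton_iff, not_or, not_exists] at hi
    exact ⟨i, hi.2, fun b hb => hi.1 b hb⟩
  let idx : ∀ (l : SimplexCategoryᵒᵖ) (a : (Λ[m+1, k] : SSet).obj l), Fin (m+2) :=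
    fun l a => (pick l a).choose
  have idx_ne : ∀ l a, idx l a ≠ k := fun l a => (pick l a).choose_spec.1
  have idx_miss : ∀ (l : SimplexCategoryᵒᵖ) (a : (Λ[m+1, k] : SSet).obj l)
      (b : Fin (l.unop.len + 1)),
      (stdSimplex.objEquiv a.1 : l.unop ⟶ SimplexCategory.mk (m+1)).toOrderHom b
        ≠ idx l a :=
    fun l a => (pick l a).choose_spec.2
  let F : ∀ (l : SimplexCategoryᵒᵖ) (a : (Λ[m+1, k] : SSet).obj l), Y.obj l := fun l a =>
    Y.map (fac (stdSimplex.objEquiv a.1) (idx l a)).op (face (idx l a) (idx_ne l a))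
  have key : ∀ (l) (a : (Λ[m+1, k] : SSet).obj l) (i : Fin (m+2)) (hi : i ≠ k)
      (β : l.unop ⟶ ⦋m⦌), β ≫ δ i = stdSimplex.objEquiv a.1 →
      F l a = Y.map β.op (face i hi) := by
    intro l a i hi β hβ
    exact hc l.unop (idx l a) i (idx_ne l a) hi _ β
      (by rw [fac_spec _ _ (idx_miss l a), hβ])
  let fmap : (Λ[m+1, k] : SSet) ⟶ Y := {
    app l := TypeCat.ofHom (F l)
    naturality := by
      intro l l' g
      ext a
      show F l' (((Λ[m+1, k] : SSet)).map g a) = Y.map g (F l a)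
      have h2 : Y.map g (F l a)
          = Y.map (g.unop ≫ fac (stdSimplex.objEquiv a.1) (idx l a)).op
              (face (idx l a) (idx_ne l a)) := by
        show Y.map g (Y.map _ _) = _
        rw [← FunctorToTypes.map_comp_apply]
        rfl
      rw [h2]
      exact key l' _ (idx l a) (idx_ne l a) _ (by
        rw [Category.assoc, fac_spec _ _ (idx_miss l a)]
        rfl) }
  let gX : Δ[m+1] ⟶ X := SSet.yonedaEquiv.symm x
  have gX_app : ∀ (l : SimplexCategoryᵒᵖ) (e : (Δ[m+1] : SSet).obj l),
      gX.app l e = X.map (stdSimplex.objEquiv e : l.unop ⟶ ⦋m+1⦌).op x := fun _ _ => rfl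
  have sq : CommSq fmap ((SSet.horn (m+1) k).ι) p gX := by
    constructor
    apply SSet.hom_ext
    intro l
    ext a
    show p.app l (F l a) = gX.app l a.1
    rw [gX_app]
    show p.app l (Y.map (fac _ (idx l a)).op (face (idx l a) (idx_ne l a))) = _
    rw [FunctorToTypes.naturality, hfp, ← map_op_comp, fac_spec _ _ (idx_miss l a)]
  have lift := ((hp.sq_hasLift sq).exists_lift).some
  refine ⟨lift.l.app _ (stdId (m+1)), ?_, ?_⟩
  · have h0 : p.app _ (lift.l.app _ (stdId (m+1)))
        = (lift.l ≫ p).app _ (stdId (m+1)) := rfl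
    rw [h0, lift.fac_right, gX_app, objEquiv_stdId]
    show X.map (𝟙 (Opposite.op (SimplexCategory.mk (m+1)))) x = x
    rw [FunctorToTypes.map_id_apply]
  · intro i hi
    have hOE : (stdSimplex.objEquiv
        ((Δ[m+1] : SSet).map (δ i).op (stdId (m+1)))) = δ i := by
      rw [stdSimplex.map_apply, Equiv.apply_symm_apply, objEquiv_stdId,
        Category.comp_id]
      rfl
    have hmem : Set.range (SSet.stdSimplex.asOrderHom
        ((Δ[m+1] : SSet).map (δ i).op (stdId (m+1)))) ∪ {k} ≠ Set.univ := by
      intro huniv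
      have hmem2 : i ∈ Set.range (SSet.stdSimplex.asOrderHom
          ((Δ[m+1] : SSet).map (δ i).op (stdId (m+1)))) ∪ {k} :=
        huniv ▸ Set.mem_univ i
      rcases hmem2 with h | h
      · obtain ⟨b, hb⟩ := h
        have hval := congrArg (Fin.val) hb
        have hres : (SSet.stdSimplex.asOrderHom ((Δ[m+1] : SSet).map (δ i).op
            (stdId (m+1)))) b = (stdSimplex.objEquiv
            ((Δ[m+1] : SSet).map (δ i).op (stdId (m+1)))).toOrderHom b := rfl
        rw [hres, hOE, val_δ] at hval
        split_ifs at hval <;> omega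
      · exact hi h
    set aδ : (Λ[m+1, k] : SSet).obj (Opposite.op (SimplexCategory.mk m)) :=
      ⟨(Δ[m+1] : SSet).map (δ i).op (stdId (m+1)), hmem⟩ with haδ
    have h1 : Y.map (δ i).op (lift.l.app _ (stdId (m+1)))
        = lift.l.app _ ((Δ[m+1] : SSet).map (δ i).op (stdId (m+1))) :=
      (FunctorToTypes.naturality lift.l _ _).symm
    rw [h1]
    have h4 : lift.l.app _ (((SSet.horn (m+1) k).ι).app _ aδ) = fmap.app _ aδ :=
      congrArg (fun (q : (Λ[m+1,k] : SSet) ⟶ Y) =>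
        q.app (Opposite.op (SimplexCategory.mk m)) aδ) lift.fac_left
    rw [show ((Δ[m+1] : SSet).map (δ i).op (stdId (m+1)))
        = ((SSet.horn (m+1) k).ι).app _ aδ from rfl, h4]
    show F _ aδ = _
    rw [key _ aδ i hi (𝟙 _) (by rw [Category.id_comp, hOE])]
    show Y.map (𝟙 (Opposite.op (SimplexCategory.mk m))) _ = _
    rw [FunctorToTypes.map_id_apply]

end Fill

section Pairing

/-- explicit pairing with a constant second component -/
def pairing (A : SSet.{u}) (t0 : Fin 2) : A ⟶ A ⊗ Δ[1] where
  app l := TypeCat.ofHom (fun a => (a, SSet.stdSimplex.const 1 t0 l))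
  naturality l l' g := by ext a; rfl

lemma pairing_eq (A : SSet.{u}) (t0 : Fin 2) :
    pairing A t0 = CartesianMonoidalCategory.lift (𝟙 A) (vtx A t0) := by
  apply CartesianMonoidalCategory.hom_ext
  · rw [CartesianMonoidalCategory.lift_fst]
    apply SSet.hom_ext; intro l; ext a; rfl
  · rw [CartesianMonoidalCategory.lift_snd]
    apply SSet.hom_ext; intro l; ext a; rfl

lemma pairing_natural {A B : SSet.{u}} (u : A ⟶ B) (t0 : Fin 2) :
    u ≫ pairing B t0 = pairing A t0 ≫ (u ⊗ₘ 𝟙 Δ[1]) := by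
  apply SSet.hom_ext; intro l; ext a; rfl

end Pairing

section Misc

lemma δ_nonsurj {m : ℕ} (i : Fin (m + 2)) :
    ¬ Function.Surjective (δ i).toOrderHom := by
  intro hs
  obtain ⟨b, hb⟩ := hs i
  have hval := congrArg Fin.val hb
  rw [val_δ] at hval
  split_ifs at hval <;> omega

lemma ns_comp {l l' l'' : SimplexCategory} {φ : l ⟶ l'} (α : l'' ⟶ l)
    (h : ¬ Function.Surjective φ.toOrderHom) :
    ¬ Function.Surjective (α ≫ φ).toOrderHom :=
  fun hs => h (Function.Surjective.of_comp
    (show Function.Surjective (⇑φ.toOrderHom ∘ ⇑α.toOrderHom) from hs))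

lemma exists_missing {l l' : SimplexCategory} {φ : l ⟶ l'}
    (h : ¬ Function.Surjective φ.toOrderHom) :
    ∃ t, ∀ b, φ.toOrderHom b ≠ t := by
  rw [Function.Surjective] at h
  push_neg at h
  obtain ⟨t, ht⟩ := h
  exact ⟨t, fun b hb => ht b hb⟩

end Misc

end BoundaryLLP

set_option maxHeartbeats 2000000 in
/-- If `p : Y ⟶ X` is a Kan fibration whose two projections `Y ×_X Y ⟶ Y` are
homotopic over `X`, then every boundary inclusion `∂Δ[n] ⟶ Δ[n]` with `n ≥ 1`
has the left lifting property against `p`. -/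
theorem boundary_llp_of_projections_homotopic {Y X : SSet.{u}} (p : Y ⟶ X)
    (hp : KanFibration p) (hH : ProjectionsHomotopic p) :
    ∀ n : ℕ, 1 ≤ n → HasLiftingProperty ((SSet.boundary n).ι) p := by
  classical
  intro n hn
  obtain ⟨N, rfl⟩ : ∃ N, n = N + 1 := ⟨n - 1, by omega⟩
  obtain ⟨H, hH0, hH1, hHp⟩ := hH
  open BoundaryLLP SimplexCategory SSet in
  constructor
  intro f g sq
  suffices hlift : Nonempty sq.LiftStruct from ⟨hlift⟩
  -- the distinguished simplex of `X`
  set x : X _⦋N+1⦌ := g.app (Opposite.op (SimplexCategory.mk (N+1)))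
    (BoundaryLLP.stdId (N+1)) with hx
  have g_app : ∀ (l : SimplexCategoryᵒᵖ) (e : (Δ[N+1] : SSet).obj l),
      g.app l e = X.map (SSet.stdSimplex.objEquiv e).op x := by
    intro l e
    have he : e = (Δ[N+1] : SSet).map (SSet.stdSimplex.objEquiv e).op
        (BoundaryLLP.stdId (N+1)) := by
      rw [SSet.stdSimplex.map_apply, BoundaryLLP.objEquiv_stdId, Category.comp_id]
      exact (Equiv.symm_apply_apply _ _).symm
    conv_lhs => rw [he]
    exact FunctorToTypes.naturality g _ _
  -- boundary simplices from morphisms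
  let bdy : ∀ (l : SimplexCategory) (φ : l ⟶ SimplexCategory.mk (N+1)),
      ¬ Function.Surjective φ.toOrderHom → (∂Δ[N+1] : SSet).obj (Opposite.op l) :=
    fun l φ hφ => ⟨(SSet.stdSimplex.objEquiv).symm φ, hφ⟩
  let fb : ∀ (l : SimplexCategory) (φ : l ⟶ SimplexCategory.mk (N+1))
      (_ : ¬ Function.Surjective φ.toOrderHom), Y.obj (Opposite.op l) :=
    fun l φ hφ => f.app (Opposite.op l) (bdy l φ hφ)
  have fb_congr : ∀ {l : SimplexCategory} (φ φ' : l ⟶ SimplexCategory.mk (N+1)) h h',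
      φ = φ' → fb l φ h = fb l φ' h' := by
    intro l φ φ' h h' he
    subst he; rfl
  have fb_nat : ∀ (l l' : SimplexCategory) (α : l' ⟶ l) (φ : l ⟶ SimplexCategory.mk (N+1))
      (hφ : ¬ Function.Surjective φ.toOrderHom) hφ',
      Y.map α.op (fb l φ hφ) = fb l' (α ≫ φ) hφ' :=
    fun l l' α φ hφ hφ' => (FunctorToTypes.naturality f α.op (bdy l φ hφ)).symm
  have fb_p : ∀ (l : SimplexCategory) (φ : l ⟶ SimplexCategory.mk (N+1))
      (hφ : ¬ Function.Surjective φ.toOrderHom),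
      p.app _ (fb l φ hφ) = X.map φ.op x := by
    intro l φ hφ
    have h1 : p.app _ (fb l φ hφ)
        = (f ≫ p).app (Opposite.op l) (bdy l φ hφ) := rfl
    rw [h1, sq.w]
    have h2 : ((SSet.boundary (N+1)).ι ≫ g).app (Opposite.op l) (bdy l φ hφ)
        = g.app (Opposite.op l) ((SSet.stdSimplex.objEquiv).symm φ) := rfl
    rw [h2, g_app, Equiv.apply_symm_apply]
  -- Step A : pick some simplex `w` over `x` via a horn filling
  obtain ⟨w, hwp, -⟩ := horn_fill p (Fin.last (N+1)) (hp N (Fin.last (N+1))) x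
    (fun i hi => fb _ (δ i) (δ_nonsurj i))
    (fun i hi => fb_p _ _ _)
    (by
      intro l i j' hi hj α β hαβ
      rw [fb_nat _ _ α _ _ (ns_comp α (δ_nonsurj i)),
        fb_nat _ _ β _ _ (ns_comp β (δ_nonsurj j'))]
      exact fb_congr _ _ _ _ hαβ)
  -- the map to the standard simplex classifying `w`
  let W : (Δ[N+1] : SSet) ⟶ Y := SSet.yonedaEquiv.symm w
  have W_app : ∀ (l : SimplexCategoryᵒᵖ) (e : (Δ[N+1] : SSet).obj l),
      W.app l e = Y.map (SSet.stdSimplex.objEquiv e).op w := fun _ _ => rfl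
  have hWp : W ≫ p = g := by
    apply SSet.hom_ext; intro l; refine ConcreteCategory.hom_ext _ _ fun e => ?_
    have h1 : (W ≫ p).app l e = p.app l (W.app l e) := rfl
    rw [h1, W_app, FunctorToTypes.naturality, hwp, g_app]
  -- the pairing into the pullback
  have hfq : f ≫ p = ((SSet.boundary (N+1)).ι ≫ W) ≫ p := by
    rw [Category.assoc, hWp, sq.w]
  let q : (∂Δ[N+1] : SSet) ⟶ Limits.pullback p p :=
    pullback.lift f ((SSet.boundary (N+1)).ι ≫ W) hfq
  have hqf : q ≫ pullback.fst p p = f := pullback.lift_fst _ _ _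
  have hqs : q ≫ pullback.snd p p = (SSet.boundary (N+1)).ι ≫ W := pullback.lift_snd _ _ _
  let K : (∂Δ[N+1] : SSet) ⊗ Δ[1] ⟶ Y := (q ⊗ₘ 𝟙 Δ[1]) ≫ H
  -- endpoint identifications
  have hK0 : pairing (∂Δ[N+1] : SSet) 0 ≫ K = f := by
    show pairing _ 0 ≫ (q ⊗ₘ 𝟙 Δ[1]) ≫ H = f
    rw [← Category.assoc, ← pairing_natural, pairing_eq, Category.assoc, hH0]
    exact hqf
  have hK1 : pairing (∂Δ[N+1] : SSet) 1 ≫ K = (SSet.boundary (N+1)).ι ≫ W := by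
    show pairing _ 1 ≫ (q ⊗ₘ 𝟙 Δ[1]) ≫ H = _
    rw [← Category.assoc, ← pairing_natural, pairing_eq, Category.assoc, hH1]
    exact hqs
  have hKp : K ≫ p = CartesianMonoidalCategory.fst _ _ ≫ f ≫ p := by
    show (q ⊗ₘ 𝟙 Δ[1]) ≫ H ≫ p = _
    rw [hHp, ← Category.assoc, CartesianMonoidalCategory.tensorHom_fst, Category.assoc,
      ← Category.assoc q (pullback.fst p p) p, hqf]
  -- the elementwise version of `K` on boundary simplices
  let KB : ∀ (l : SimplexCategory) (φ : l ⟶ SimplexCategory.mk (N+1))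
      (_ : ¬ Function.Surjective φ.toOrderHom) (_ : l ⟶ SimplexCategory.mk 1),
      Y.obj (Opposite.op l) :=
    fun l φ hφ t => K.app (Opposite.op l)
      (bdy l φ hφ, (SSet.stdSimplex.objEquiv).symm t)
  have KB_congr : ∀ {l : SimplexCategory} (φ φ' : l ⟶ SimplexCategory.mk (N+1)) h h'
      (t t' : l ⟶ SimplexCategory.mk 1), φ = φ' → t = t' → KB l φ h t = KB l φ' h' t' := by
    intro l φ φ' h h' t t' he ht
    subst he; subst ht; rfl
  have KB_nat : ∀ (l l' : SimplexCategory) (α : l' ⟶ l) (φ : l ⟶ SimplexCategory.mk (N+1))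
      (hφ : ¬ Function.Surjective φ.toOrderHom) hφ' (t : l ⟶ SimplexCategory.mk 1),
      Y.map α.op (KB l φ hφ t) = KB l' (α ≫ φ) hφ' (α ≫ t) :=
    fun l l' α φ hφ hφ' t => (FunctorToTypes.naturality K α.op
      ((bdy l φ hφ, (SSet.stdSimplex.objEquiv).symm t) :
        (∂Δ[N+1] : SSet).obj (Opposite.op l) × Δ[1].obj (Opposite.op l))).symm
  have KB_p : ∀ (l : SimplexCategory) (φ : l ⟶ SimplexCategory.mk (N+1))
      (hφ : ¬ Function.Surjective φ.toOrderHom) (t : l ⟶ SimplexCategory.mk 1),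
      p.app _ (KB l φ hφ t) = X.map φ.op x := by
    intro l φ hφ t
    have h1 : p.app _ (KB l φ hφ t) = (K ≫ p).app (Opposite.op l)
      (bdy l φ hφ, (SSet.stdSimplex.objEquiv).symm t) := rfl
    rw [h1, hKp]
    have h2 : (CartesianMonoidalCategory.fst _ _ ≫ f ≫ p).app (Opposite.op l)
        (bdy l φ hφ, (SSet.stdSimplex.objEquiv).symm t)
        = p.app _ (fb l φ hφ) := rfl
    rw [h2, fb_p]
  have KB_0 : ∀ (l : SimplexCategory) (φ : l ⟶ SimplexCategory.mk (N+1))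
      (hφ : ¬ Function.Surjective φ.toOrderHom),
      KB l φ hφ (SimplexCategory.Hom.mk (OrderHom.const _ 0)) = fb l φ hφ := by
    intro l φ hφ
    have h1 : KB l φ hφ (SimplexCategory.Hom.mk (OrderHom.const _ 0))
        = (pairing (∂Δ[N+1] : SSet) 0 ≫ K).app (Opposite.op l) (bdy l φ hφ) := rfl
    rw [h1, hK0]
  have KB_1 : ∀ (l : SimplexCategory) (φ : l ⟶ SimplexCategory.mk (N+1))
      (hφ : ¬ Function.Surjective φ.toOrderHom),
      KB l φ hφ (SimplexCategory.Hom.mk (OrderHom.const _ 1)) = Y.map φ.op w := by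
    intro l φ hφ
    have h1 : KB l φ hφ (SimplexCategory.Hom.mk (OrderHom.const _ 1))
        = (pairing (∂Δ[N+1] : SSet) 1 ≫ K).app (Opposite.op l) (bdy l φ hφ) := rfl
    rw [h1, hK1]
    have h2 : ((SSet.boundary (N+1)).ι ≫ W).app (Opposite.op l) (bdy l φ hφ)
        = W.app (Opposite.op l) ((SSet.stdSimplex.objEquiv).symm φ) := rfl
    rw [h2, W_app, Equiv.apply_symm_apply]
  -- value of identity
  have val_id' : ∀ (a : SimplexCategory) (t : Fin (a.len + 1)),
      (((𝟙 a : a ⟶ a).toOrderHom t : Fin (a.len+1)) : ℕ) = (t : ℕ) := fun _ _ => rfl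
  -- the invariant for the prism filling
  let Inv : ℕ → Y _⦋N+1⦌ → Prop := fun c z =>
    p.app _ z = x ∧ ∀ i : Fin (N+2), Y.map (SimplexCategory.δ i).op z
      = KB _ (SimplexCategory.δ i) (δ_nonsurj i)
          (SimplexCategory.δ i ≫ tm (SimplexCategory.mk (N+1)) c)
  have base : Inv 0 w := by
    refine ⟨hwp, fun i => ?_⟩
    rw [comp_tm_zero, KB_1]
  have step : ∀ (j : ℕ), j ≤ N + 1 → ∀ z, Inv j z → ∃ z', Inv (j+1) z' := by
    intro j hj z hz
    set jF : Fin (N+2) := ⟨j, by omega⟩ with hjFdef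
    have hjFv : ((jF : Fin (N+2)) : ℕ) = j := rfl
    have hjSv : ((jF.succ : Fin (N+3)) : ℕ) = j + 1 := rfl
    have hlen1 : (SimplexCategory.mk (N+1)).len = N + 1 := rfl
    have hlen2 : (SimplexCategory.mk (N+2)).len = N + 2 := rfl
    -- nonsurjectivity criterion for composites with σ jF
    have ns2 : ∀ (l : SimplexCategory) (γ : l ⟶ SimplexCategory.mk (N+2)) (v : Fin (N+3)),
        (v : ℕ) ≠ j → (v : ℕ) ≠ j + 1 → (∀ b, γ.toOrderHom b ≠ v) →
        ¬ Function.Surjective (γ ≫ SimplexCategory.σ jF).toOrderHom := by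
      intro l γ v hv1 hv2 hmiss hsurj
      have hvlt := v.isLt
      obtain ⟨b, hb⟩ := hsurj ⟨if (v : ℕ) < j then (v : ℕ) else (v : ℕ) - 1, by
        split_ifs <;> omega⟩
      have hval := congrArg Fin.val hb
      rw [comp_val, val_σ] at hval
      have hne : ((γ.toOrderHom b : Fin (N+3)) : ℕ) ≠ (v : ℕ) :=
        fun hcc => hmiss b (Fin.ext hcc)
      have hlt := (γ.toOrderHom b).isLt
      have hval2 : (if ((γ.toOrderHom b : Fin (N+3)) : ℕ) ≤ ((jF : Fin (N+2)) : ℕ)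
          then ((γ.toOrderHom b : Fin (N+3)) : ℕ)
          else ((γ.toOrderHom b : Fin (N+3)) : ℕ) - 1)
          = if (v : ℕ) < j then (v : ℕ) else (v : ℕ) - 1 := hval
      split_ifs at hval2 <;> omega
    have miss_comp : ∀ (l : SimplexCategory) (α : l ⟶ SimplexCategory.mk (N+1))
        (i : Fin (N+3)) (b : Fin (l.len + 1)), (α ≫ SimplexCategory.δ i).toOrderHom b ≠ i := by
      intro l α i b hb
      have hval := congrArg Fin.val hb
      rw [comp_val, val_δ] at hval
      split_ifs at hval <;> omega
    have hface_ns : ∀ (i : Fin (N+3)), (i : ℕ) ≠ j → (i : ℕ) ≠ j + 1 →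
        ¬ Function.Surjective (SimplexCategory.δ i ≫ SimplexCategory.σ jF).toOrderHom := by
      intro i h1 h2
      refine ns2 _ (SimplexCategory.δ i) i h1 h2 (fun b hb => ?_)
      have hval := congrArg Fin.val hb
      rw [val_δ] at hval
      split_ifs at hval <;> omega
    have hidσ' : ∀ (i : Fin (N+3)), (i : ℕ) = j →
        SimplexCategory.δ i ≫ SimplexCategory.σ jF = 𝟙 (SimplexCategory.mk (N+1)) := by
      intro i hij
      apply homext; intro t
      rw [comp_val, val_σ, val_δ, hjFv, val_id']
      have := t.isLt
      split_ifs <;> omega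
    have hidσ2 : SimplexCategory.δ jF.succ ≫ SimplexCategory.σ jF
        = 𝟙 (SimplexCategory.mk (N+1)) := by
      apply homext; intro t
      rw [comp_val, val_σ, val_δ, hjFv, hjSv, val_id']
      have := t.isLt
      split_ifs <;> omega
    -- the faces of the `j`-th prism simplex
    let faces : ∀ (i : Fin (N+3)), i ≠ jF.succ → Y _⦋N+1⦌ := fun i hi =>
      if hij : (i : ℕ) = j then z
      else KB _ (SimplexCategory.δ i ≫ SimplexCategory.σ jF)
        (hface_ns i hij (fun hcc => hi (Fin.ext hcc)))
        (SimplexCategory.δ i ≫ tm _ (j+1))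
    -- uniform description of pullbacks of the faces
    have uni : ∀ (i : Fin (N+3)) (hi : i ≠ jF.succ) (l : SimplexCategory)
        (α : l ⟶ SimplexCategory.mk (N+1))
        (hns : ¬ Function.Surjective
          ((α ≫ SimplexCategory.δ i) ≫ SimplexCategory.σ jF).toOrderHom),
        Y.map α.op (faces i hi)
          = KB l ((α ≫ SimplexCategory.δ i) ≫ SimplexCategory.σ jF) hns
            ((α ≫ SimplexCategory.δ i) ≫ tm _ (j+1)) := by
      intro i hi l α hns
      by_cases hij : (i : ℕ) = j
      · have hzface : faces i hi = z := dif_pos hij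
        rw [hzface]
        have hαred : (α ≫ SimplexCategory.δ i) ≫ SimplexCategory.σ jF = α := by
          rw [Category.assoc, hidσ' i hij, Category.comp_id]
        have hα_ns : ¬ Function.Surjective α.toOrderHom := by
          rw [← hαred]; exact hns
        obtain ⟨t, ht⟩ := exists_missing hα_ns
        have hfac : fac α t ≫ SimplexCategory.δ t = α := fac_spec α t ht
        conv_lhs => rw [← hfac]
        rw [map_op_comp, hz.2 t,
          KB_nat _ _ (fac α t) _ _ (ns_comp _ (δ_nonsurj t)) _]
        have e1 : SimplexCategory.δ i ≫ tm (SimplexCategory.mk (N+2)) (j+1)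
            = tm (SimplexCategory.mk (N+1)) j := by
          rw [δ_tm, if_pos (show (i : ℕ) < j + 1 by omega)]
          congr 1
        refine KB_congr _ _ _ _ _ _ ?_ ?_
        · rw [hαred]; exact hfac
        · rw [Category.assoc α (SimplexCategory.δ i) (tm _ (j+1)), e1,
            ← Category.assoc, hfac]
      · have hKface : faces i hi = KB _ (SimplexCategory.δ i ≫ SimplexCategory.σ jF)
            (hface_ns i hij (fun hcc => hi (Fin.ext hcc)))
            (SimplexCategory.δ i ≫ tm _ (j+1)) := dif_neg hij
        rw [hKface, KB_nat _ _ α _ _ (by rw [Category.assoc] at hns; exact hns) _]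
        refine KB_congr _ _ _ _ _ _ ?_ ?_
        · rw [Category.assoc]
        · rw [Category.assoc]
    -- the lifting data for the horn Λ[N+2, jF.succ]
    have hfpS : ∀ (i : Fin (N+3)) (hi : i ≠ jF.succ),
        p.app _ (faces i hi) = X.map (SimplexCategory.δ i).op (X.map (SimplexCategory.σ jF).op x) := by
      intro i hi
      rw [← map_op_comp]
      by_cases hij : (i : ℕ) = j
      · rw [show faces i hi = z from dif_pos hij, hidσ' i hij]
        have : X.map (𝟙 (Opposite.op (SimplexCategory.mk (N+1)))) x = x :=
          FunctorToTypes.map_id_apply X x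
        rw [show (𝟙 (SimplexCategory.mk (N+1))).op = 𝟙 (Opposite.op (SimplexCategory.mk (N+1))) from rfl,
          this]
        exact hz.1
      · rw [show faces i hi = KB _ (SimplexCategory.δ i ≫ SimplexCategory.σ jF)
            (hface_ns i hij (fun hcc => hi (Fin.ext hcc)))
            (SimplexCategory.δ i ≫ tm _ (j+1)) from dif_neg hij, KB_p]
    have hcS : ∀ (l : SimplexCategory) (i i' : Fin (N+3)) (hi : i ≠ jF.succ) (hi' : i' ≠ jF.succ)
        (α β : l ⟶ SimplexCategory.mk (N+1)),
        α ≫ SimplexCategory.δ i = β ≫ SimplexCategory.δ i' →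
        Y.map α.op (faces i hi) = Y.map β.op (faces i' hi') := by
      intro l i i' hi hi' α β hαβ
      by_cases hii : i = i'
      · subst hii
        have hab : α = β := (cancel_mono (SimplexCategory.δ i)).mp hαβ
        subst hab
        rfl
      · have hvv : ∃ v : Fin (N+3), (v : ℕ) ≠ j ∧ (v : ℕ) ≠ j + 1 ∧
            (∀ b, (α ≫ SimplexCategory.δ i).toOrderHom b ≠ v) := by
          by_cases hij : (i : ℕ) = j
          · refine ⟨i', ?_, ?_, ?_⟩
            · intro hcc; exact hii (Fin.ext (by rw [hij, hcc]))
            · intro hcc; exact hi' (Fin.ext (by rw [hcc, hjSv]))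
            · intro b; rw [hαβ]; exact miss_comp l β i' b
          · refine ⟨i, hij, ?_, ?_⟩
            · intro hcc; exact hi (Fin.ext (by rw [hcc, hjSv]))
            · exact miss_comp l α i
        obtain ⟨v, hv1, hv2, hv3⟩ := hvv
        have hns : ¬ Function.Surjective
            ((α ≫ SimplexCategory.δ i) ≫ SimplexCategory.σ jF).toOrderHom :=
          ns2 l _ v hv1 hv2 hv3
        have hns' : ¬ Function.Surjective
            ((β ≫ SimplexCategory.δ i') ≫ SimplexCategory.σ jF).toOrderHom := by
          rw [← hαβ]; exact hns
        rw [uni i hi l α hns, uni i' hi' l β hns']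
        exact KB_congr _ _ _ _ _ _ (by rw [hαβ]) (by rw [hαβ])
    obtain ⟨y, hyp, hyf⟩ := horn_fill p jF.succ (hp (N+1) jF.succ)
      (X.map (SimplexCategory.σ jF).op x) faces hfpS hcS
    refine ⟨Y.map (SimplexCategory.δ jF.succ).op y, ?_, ?_⟩
    · rw [FunctorToTypes.naturality, hyp, ← map_op_comp, hidσ2]
      exact FunctorToTypes.map_id_apply X x
    · intro i
      rw [← map_op_comp]
      by_cases hile : (i : ℕ) ≤ j
      · -- use the face i.castSucc
        have hjlt : j < N + 2 := by omega
        have hcomp : SimplexCategory.δ i ≫ SimplexCategory.δ jF.succ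
            = SimplexCategory.δ (⟨j, hjlt⟩ : Fin (N+2)) ≫ SimplexCategory.δ i.castSucc := by
          apply homext; intro t
          rw [comp_val, comp_val, val_δ, val_δ]
          rw [val_δ, val_δ]
          have h1 : ((i.castSucc : Fin (N+3)) : ℕ) = (i : ℕ) := rfl
          have h2 : (((⟨j, hjlt⟩ : Fin (N+2))) : ℕ) = j := rfl
          rw [h1, h2, hjSv]
          have := t.isLt
          split_ifs <;> omega
        have hiS : i.castSucc ≠ jF.succ := by
          intro hcc
          have := congrArg Fin.val hcc
          rw [hjSv] at this
          have h1 : ((i.castSucc : Fin (N+3)) : ℕ) = (i : ℕ) := rfl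
          omega
        rw [hcomp, map_op_comp, hyf i.castSucc hiS]
        have hred : (SimplexCategory.δ (⟨j, hjlt⟩ : Fin (N+2)) ≫ SimplexCategory.δ i.castSucc)
            ≫ SimplexCategory.σ jF = SimplexCategory.δ i := by
          rw [← hcomp, Category.assoc, hidσ2, Category.comp_id]
        rw [uni i.castSucc hiS _ (SimplexCategory.δ (⟨j, hjlt⟩ : Fin (N+2)))
          (by rw [hred]; exact δ_nonsurj i)]
        refine KB_congr _ _ _ _ _ _ hred ?_
        rw [← hcomp, Category.assoc, δ_tm, if_neg (by rw [hjSv]; omega)]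
      · -- use the face i.succ
        have hjlt : j + 1 < N + 2 := by have := i.isLt; omega
        have hcomp : SimplexCategory.δ i ≫ SimplexCategory.δ jF.succ
            = SimplexCategory.δ (⟨j + 1, hjlt⟩ : Fin (N+2)) ≫ SimplexCategory.δ i.succ := by
          apply homext; intro t
          rw [comp_val, comp_val, val_δ, val_δ]
          rw [val_δ, val_δ]
          have h1 : ((i.succ : Fin (N+3)) : ℕ) = (i : ℕ) + 1 := rfl
          have h2 : (((⟨j + 1, hjlt⟩ : Fin (N+2))) : ℕ) = j + 1 := rfl
          rw [h1, h2, hjSv]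
          have := t.isLt
          split_ifs <;> omega
        have hiS : i.succ ≠ jF.succ := by
          intro hcc
          have := congrArg Fin.val hcc
          rw [hjSv] at this
          have h1 : ((i.succ : Fin (N+3)) : ℕ) = (i : ℕ) + 1 := rfl
          omega
        rw [hcomp, map_op_comp, hyf i.succ hiS]
        have hred : (SimplexCategory.δ (⟨j + 1, hjlt⟩ : Fin (N+2)) ≫ SimplexCategory.δ i.succ)
            ≫ SimplexCategory.σ jF = SimplexCategory.δ i := by
          rw [← hcomp, Category.assoc, hidσ2, Category.comp_id]
        rw [uni i.succ hiS _ (SimplexCategory.δ (⟨j + 1, hjlt⟩ : Fin (N+2)))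
          (by rw [hred]; exact δ_nonsurj i)]
        refine KB_congr _ _ _ _ _ _ hred ?_
        rw [← hcomp, Category.assoc, δ_tm, if_neg (by rw [hjSv]; omega)]
  -- iterate the filling over the prism decomposition
  have main : ∀ c : ℕ, c ≤ N + 2 → ∃ z, Inv c z := by
    intro c
    induction c with
    | zero => exact fun _ => ⟨w, base⟩
    | succ j ih =>
      intro hc
      obtain ⟨z, hz⟩ := ih (by omega)
      exact step j (by omega) z hz
  obtain ⟨z, hz1, hz2⟩ := main (N+2) (le_refl _)
  -- the lift
  let L : (Δ[N+1] : SSet) ⟶ Y := SSet.yonedaEquiv.symm z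
  have L_app : ∀ (l : SimplexCategoryᵒᵖ) (e : (Δ[N+1] : SSet).obj l),
      L.app l e = Y.map (SSet.stdSimplex.objEquiv e).op z := fun _ _ => rfl
  refine ⟨⟨L, ?_, ?_⟩⟩
  · -- boundaryInclusion ≫ L = f
    apply SSet.hom_ext; intro l; refine ConcreteCategory.hom_ext _ _ fun a => ?_
    have h1 : ((SSet.boundary (N+1)).ι ≫ L).app l a
        = Y.map (SSet.stdSimplex.objEquiv a.1).op z := rfl
    have hφns : ¬ Function.Surjective
        (SSet.stdSimplex.objEquiv a.1 : l.unop ⟶ SimplexCategory.mk (N+1)).toOrderHom :=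
      a.2
    obtain ⟨t, ht⟩ := exists_missing hφns
    have hfac := fac_spec _ t ht
    rw [h1, ← hfac, map_op_comp, hz2 t,
      KB_nat _ _ (fac _ t) _ _ (ns_comp _ (δ_nonsurj t)) _]
    have h2 : KB l.unop (fac (SSet.stdSimplex.objEquiv a.1) t ≫ SimplexCategory.δ t)
        (ns_comp _ (δ_nonsurj t))
        (fac (SSet.stdSimplex.objEquiv a.1) t ≫ (SimplexCategory.δ t ≫ tm _ (N+2)))
        = KB l.unop (SSet.stdSimplex.objEquiv a.1) hφns
          (SimplexCategory.Hom.mk (OrderHom.const _ 0)) := by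
      refine KB_congr _ _ _ _ _ _ hfac ?_
      rw [← Category.assoc, hfac, comp_tm_big _ (by omega)]
    rw [h2, KB_0]
    show f.app l (bdy l.unop _ hφns) = f.app l a
    congr 1
  · -- L ≫ p = g
    apply SSet.hom_ext; intro l; refine ConcreteCategory.hom_ext _ _ fun e => ?_
    have h1 : (L ≫ p).app l e
        = p.app l (Y.map (SSet.stdSimplex.objEquiv e).op z) := rfl
    rw [h1, FunctorToTypes.naturality, hz1]
    exact (g_app l e).symm
end
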